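/- arXiv:1310.3977 — 2 statements merged into one kernel-verified Lean document; each statement's English description precedes it below -/
import Mathlib

section
/- For Q ∈ (0,1), the sequence a_k = k^Q · Γ(k-Q)/Γ(k), defined for integers k ≥ 1, is monotonically decreasing. In particular Γ(k-Q)/Γ(k) ≤ Γ(1-Q)·k^{-Q} for all k ≥ 1. -/
private lemma step_lemma (Q x : ℝ) (hQ : 0 < Q) (hQ1 : Q < 1) (hx : 1 ≤ x) :
    (x + 1) ^ Q * Real.Gamma ((x + 1) - Q) / Real.Gamma (x + 1) ≤
      x ^ Q * Real.Gamma (x - Q) / Real.Gamma x := by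
  have hx0 : (0:ℝ) < x := by linarith
  have hxQ : 0 < x - Q := by linarith
  have hG1 : 0 < Real.Gamma x := Real.Gamma_pos_of_pos hx0
  have hG2 : 0 < Real.Gamma (x - Q) := Real.Gamma_pos_of_pos hxQ
  rw [show x + 1 - Q = (x - Q) + 1 by ring, Real.Gamma_add_one hxQ.ne',
    Real.Gamma_add_one hx0.ne']
  have key : (x + 1) ^ Q * (x - Q) ≤ x ^ Q * x := by
    have h1 : x + 1 = x * (1 + 1 / x) := by field_simp
    rw [h1, Real.mul_rpow hx0.le (by positivity)]
    have hb : (1 + 1 / x) ^ Q ≤ 1 + Q * (1 / x) :=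
      rpow_one_add_le_one_add_mul_self (le_trans (by norm_num) (div_nonneg zero_le_one hx0.le)) hQ.le hQ1.le
    have hxp : 0 < x ^ Q := Real.rpow_pos_of_pos hx0 Q
    have h2 : (1 + 1 / x) ^ Q * (x - Q) ≤ (1 + Q * (1 / x)) * (x - Q) := by
      exact mul_le_mul_of_nonneg_right hb hxQ.le
    have h3 : (1 + Q * (1 / x)) * (x - Q) ≤ x := by
      have : (1 + Q * (1 / x)) * (x - Q) = x - Q ^ 2 / x := by field_simp; ring
      rw [this]
      have : 0 < Q ^ 2 / x := by positivity
      linarith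
    calc x ^ Q * (1 + 1 / x) ^ Q * (x - Q) = x ^ Q * ((1 + 1 / x) ^ Q * (x - Q)) := by ring
      _ ≤ x ^ Q * x := by
          apply mul_le_mul_of_nonneg_left (h2.trans h3) hxp.le
  rw [div_le_div_iff₀ (by positivity) hG1]
  nlinarith [mul_le_mul_of_nonneg_right key (mul_pos hG2 hG1).le]

theorem stmt4 (Q : ℝ) (hQ : 0 < Q) (hQ1 : Q < 1) :
    (∀ k : ℕ, 1 ≤ k →
      ((k : ℝ) + 1) ^ Q * Real.Gamma (((k : ℝ) + 1) - Q) / Real.Gamma ((k : ℝ) + 1) ≤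
        (k : ℝ) ^ Q * Real.Gamma ((k : ℝ) - Q) / Real.Gamma (k : ℝ)) ∧
    (∀ k : ℕ, 1 ≤ k →
      Real.Gamma ((k : ℝ) - Q) / Real.Gamma (k : ℝ) ≤
        Real.Gamma (1 - Q) * (k : ℝ) ^ (-Q)) := by
  have hstep := fun k : ℕ => fun hk : 1 ≤ k =>
    step_lemma Q (k : ℝ) hQ hQ1 (by exact_mod_cast hk)
  refine ⟨hstep, ?_⟩
  have hmono : ∀ k : ℕ, 1 ≤ k →
      (k : ℝ) ^ Q * Real.Gamma ((k : ℝ) - Q) / Real.Gamma (k : ℝ) ≤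
        Real.Gamma (1 - Q) := by
    intro k hk
    induction k with
    | zero => omega
    | succ n ih =>
      rcases Nat.eq_or_lt_of_le hk with h | h
      · simp only [← h]
        norm_num [Real.Gamma_one]
      · have hn : 1 ≤ n := by omega
        have := hstep n hn
        push_cast at this ⊢
        exact le_trans this (ih hn)
  intro k hk
  have hk1 : (1:ℝ) ≤ (k : ℝ) := by exact_mod_cast hk
  have hk0 : (0:ℝ) < (k : ℝ) := by linarith
  have h := hmono k hk
  have hkp : 0 < (k : ℝ) ^ Q := Real.rpow_pos_of_pos hk0 Q
  have hGk : 0 < Real.Gamma (k : ℝ) := Real.Gamma_pos_of_pos hk0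
  rw [Real.rpow_neg hk0.le, ← div_eq_mul_inv, le_div_iff₀ hkp]
  have heq : Real.Gamma ((k:ℝ) - Q) / Real.Gamma (k:ℝ) * (k:ℝ) ^ Q =
      (k:ℝ) ^ Q * Real.Gamma ((k:ℝ) - Q) / Real.Gamma (k:ℝ) := by ring
  rw [heq]; exact h
end

section
/- Let W_ε : ℝ³ → ℝ be continuous, u∞ = [U_ε - W_ε]_+ with U_ε ∈ ℝ chosen so that ∫u∞ dx = 1, and let u : ℝ³ → [0,∞) be any probability density in L²(ℝ³). Then ∫_{ℝ³} (W_ε + u∞)(u - u∞) dx ≥ 0, and consequently L_u(u) := ∫(½(u² - u∞²) + W_ε(u - u∞)) dx ≥ ½‖u - u∞‖²_{L²(ℝ³)}. -/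
/-! Write `u∞ = [U - W]₊`. Then `(W + u∞ - U)(u - u∞) ≥ 0` pointwise: where `u∞ > 0` the first
factor vanishes, and elsewhere both factors are nonnegative because `u ≥ 0`. Since `u` and `u∞`
have the same mass, `∫ U (u - u∞) = 0`, so integrating gives `∫ (W + u∞)(u - u∞) ≥ 0`. The energy
bound follows from the identity `½(u² - u∞²) + W(u - u∞) = ½(u - u∞)² + (W + u∞)(u - u∞)`. -/

open MeasureTheory

lemma add_max_sub_mul_sub_nonneg (U w v : ℝ) (hv : 0 ≤ v) :
    0 ≤ (w + max (U - w) 0 - U) * (v - max (U - w) 0) := by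
  rcases le_total (U - w) 0 with h | h
  · rw [max_eq_right h]
    exact mul_nonneg (by linarith) (by linarith)
  · rw [max_eq_left h]
    simp

section

variable {α : Type*} [MeasurableSpace α] {μ : Measure α}

lemma integrable_add_mul_sub {W u v : α → ℝ} (hu : MemLp u 2 μ) (hv : MemLp v 2 μ)
    (hWu : Integrable (fun x => W x * u x) μ) (hWv : Integrable (fun x => W x * v x) μ) :
    Integrable (fun x => (W x + v x) * (u x - v x)) μ := by
  have hvu : Integrable (fun x => v x * u x) μ := hv.integrable_mul hu
  refine ((hWu.sub hWv).add (hvu.sub hv.integrable_sq)).congr (ae_of_all _ fun x => ?_)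
  simp only [Pi.sub_apply, Pi.add_apply]
  ring

lemma integral_add_posPart_mul_sub_nonneg {W u v : α → ℝ} {U : ℝ}
    (hv_def : ∀ x, v x = max (U - W x) 0) (hu_nonneg : ∀ x, 0 ≤ u x)
    (hu : Integrable u μ) (hv : Integrable v μ) (hmass : ∫ x, u x ∂μ = ∫ x, v x ∂μ)
    (hint : Integrable (fun x => (W x + v x) * (u x - v x)) μ) :
    0 ≤ ∫ x, (W x + v x) * (u x - v x) ∂μ := by
  have hpointwise : ∀ x, U * (u x - v x) ≤ (W x + v x) * (u x - v x) := fun x => by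
    have := add_max_sub_mul_sub_nonneg U (W x) (u x) (hu_nonneg x)
    rw [← hv_def x] at this
    linarith
  calc (0 : ℝ) = ∫ x, U * (u x - v x) ∂μ := by
        rw [integral_const_mul, integral_sub hu hv, hmass, sub_self, mul_zero]
    _ ≤ _ := integral_mono ((hu.sub hv).const_mul U) hint hpointwise

lemma half_integral_sq_sub_le {W u v : α → ℝ} (hu : MemLp u 2 μ) (hv : MemLp v 2 μ)
    (hint : Integrable (fun x => (W x + v x) * (u x - v x)) μ)
    (hnonneg : 0 ≤ ∫ x, (W x + v x) * (u x - v x) ∂μ) :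
    (1 / 2) * ∫ x, (u x - v x) ^ 2 ∂μ ≤
      ∫ x, ((1 / 2) * (u x ^ 2 - v x ^ 2) + W x * (u x - v x)) ∂μ := by
  have hsplit : ∀ x, (1 / 2) * (u x ^ 2 - v x ^ 2) + W x * (u x - v x)
      = (1 / 2) * (u x - v x) ^ 2 + (W x + v x) * (u x - v x) := fun x => by ring
  have hsq : Integrable (fun x => (u x - v x) ^ 2) μ := (hu.sub hv).integrable_sq
  simp_rw [hsplit]
  rw [integral_add (hsq.const_mul _) hint, integral_const_mul]
  linarith

end

theorem stmt17_general (Weps : EuclideanSpace ℝ (Fin 3) → ℝ)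
    (Ueps : ℝ)
    (u_inf : EuclideanSpace ℝ (Fin 3) → ℝ)
    (hu_inf_def : ∀ x, u_inf x = max (Ueps - Weps x) 0)
    (hu_inf_int : Integrable u_inf volume)
    (hu_inf_mass : (∫ x, u_inf x) = 1)
    (hu_inf2 : MemLp u_inf 2 volume)
    (u : EuclideanSpace ℝ (Fin 3) → ℝ)
    (hu : ∀ x, 0 ≤ u x) (huint : Integrable u volume)
    (humass : (∫ x, u x) = 1) (hu2 : MemLp u 2 volume)
    (hWu : Integrable (fun x => Weps x * u x) volume)
    (hWu_inf : Integrable (fun x => Weps x * u_inf x) volume) :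
    (0 ≤ ∫ x, (Weps x + u_inf x) * (u x - u_inf x)) ∧
      (1 / 2) * (∫ x, (u x - u_inf x) ^ 2) ≤
        ∫ x, ((1 / 2) * ((u x) ^ 2 - (u_inf x) ^ 2) + Weps x * (u x - u_inf x)) := by
  have hint := integrable_add_mul_sub hu2 hu_inf2 hWu hWu_inf
  have hnonneg := integral_add_posPart_mul_sub_nonneg hu_inf_def hu huint hu_inf_int
    (humass.trans hu_inf_mass.symm) hint
  exact ⟨hnonneg, half_integral_sq_sub_le hu2 hu_inf2 hint hnonneg⟩

theorem stmt17 (Weps : EuclideanSpace ℝ (Fin 3) → ℝ) (hWcont : Continuous Weps)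
    (Ueps : ℝ)
    (u_inf : EuclideanSpace ℝ (Fin 3) → ℝ)
    (hu_inf_def : ∀ x, u_inf x = max (Ueps - Weps x) 0)
    (hu_inf_int : Integrable u_inf volume)
    (hu_inf_mass : (∫ x, u_inf x) = 1)
    (hu_inf2 : MemLp u_inf 2 volume)
    (u : EuclideanSpace ℝ (Fin 3) → ℝ)
    (hu : ∀ x, 0 ≤ u x) (huint : Integrable u volume)
    (humass : (∫ x, u x) = 1) (hu2 : MemLp u 2 volume)
    (hWu : Integrable (fun x => Weps x * u x) volume)
    (hWu_inf : Integrable (fun x => Weps x * u_inf x) volume) :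
    (0 ≤ ∫ x, (Weps x + u_inf x) * (u x - u_inf x)) ∧
      (1 / 2) * (∫ x, (u x - u_inf x) ^ 2) ≤
        ∫ x, ((1 / 2) * ((u x) ^ 2 - (u_inf x) ^ 2) + Weps x * (u x - u_inf x)) :=
  stmt17_general Weps Ueps u_inf hu_inf_def hu_inf_int hu_inf_mass hu_inf2 u hu huint humass hu2 hWu
    hWu_inf
end
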